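/- arXiv:2510.20689 — 6 statements merged into one kernel-verified Lean document; each statement's English description precedes it below -/
import Mathlib

section
/- Let K be a commutative Q-algebra and A an n×n matrix over K such that Tr(A^i) = 0 for every i ∈ {1, 2, ..., n}. Then the characteristic polynomial of A equals t^n. -/
/-!
Over an algebraically closed field the trace of `A ^ i` is the `i`-th power sum of the roots of
`χ_A`, so Newton's identities for the roots become the matrix identities
`k c_{n-k} + ∑_{j<k} c_{n-j} tr (A ^ (k-j)) = 0` (`k ≤ n`) between the coefficients `c_i` of
`χ_A` and the traces of powers of `A`. These are polynomial identities in the entries of `A`, so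
they hold over every commutative ring: it suffices to check them for the generic matrix over
`ℤ[X_ij]`, which embeds into an algebraically closed field. When the traces vanish, the identities
read `k c_{n-k} = 0`, and `k` is invertible in a `ℚ`-algebra.
-/

open Polynomial Module Finset

theorem Multiset.mul_esymm_eq_sum {R : Type*} [CommRing R] (s : Multiset R) (k : ℕ) :
    k * s.esymm k = (-1) ^ (k + 1) *
      ∑ i ∈ Finset.range k, (-1) ^ i * s.esymm i * (s.map (· ^ (k - i))).sum := by
  set x := s.toList.get
  have hx : univ.val.map x = s := by rw [Fin.univ_val_map, List.ofFn_get, coe_toList]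
  have hpsum (j : ℕ) : MvPolynomial.aeval x (MvPolynomial.psum _ R j) = (s.map (· ^ j)).sum := by
    conv_rhs => rw [← hx, map_map]
    simp only [MvPolynomial.psum, map_sum, map_pow, MvPolynomial.aeval_X]
    rfl
  have := congrArg (MvPolynomial.aeval x) (MvPolynomial.mul_esymm_eq_sum (Fin s.toList.length) R k)
  rw [sum_filter, Nat.sum_antidiagonal_eq_sum_range_succ_mk, sum_range_succ, if_neg (lt_irrefl k),
    add_zero, sum_congr rfl fun i hi ↦ if_pos (mem_range.mp hi)] at this
  simpa only [map_mul, map_natCast, map_pow, map_neg, map_one, map_sum,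
    MvPolynomial.aeval_esymm_eq_multiset_esymm, hx, hpsum] using this

theorem Polynomial.newton_identity_of_card_roots {R : Type*} [CommRing R] [IsDomain R] {p : R[X]}
    (hroots : Multiset.card p.roots = p.natDegree) {k : ℕ} (hk : k ≤ p.natDegree) :
    k * p.coeff (p.natDegree - k) +
      ∑ j ∈ range k, p.coeff (p.natDegree - j) * (p.roots.map (· ^ (k - j))).sum = 0 := by
  have hcoeff {j : ℕ} (hj : j ≤ p.natDegree) :
      p.coeff (p.natDegree - j) = p.leadingCoeff * ((-1) ^ j * p.roots.esymm j) := by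
    rw [coeff_eq_esymm_roots_of_card hroots (Nat.sub_le _ j), Nat.sub_sub_self hj, mul_assoc]
  have hsign : (-1 : R) ^ k * (-1) ^ k = 1 := by rw [← mul_pow, neg_one_mul, neg_neg, one_pow]
  rw [hcoeff hk, sum_congr rfl fun j hj ↦ by rw [hcoeff (by grind)]]
  simp_rw [mul_assoc p.leadingCoeff, ← mul_sum]
  set S := ∑ i ∈ range k, (-1) ^ i * p.roots.esymm i * (p.roots.map (· ^ (k - i))).sum
  linear_combination (p.leadingCoeff * (-1) ^ k) * p.roots.mul_esymm_eq_sum k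
    - p.leadingCoeff * S * hsign

theorem LinearMap.trace_pow_eq_of_isNilpotent_sub {R M : Type*} [CommRing R] [IsReduced R]
    [AddCommGroup M] [Module R M] [Module.Free R M] [Module.Finite R M]
    {f : Module.End R M} {μ : R} (hf : IsNilpotent (f - algebraMap R _ μ)) (k : ℕ) :
    trace R M (f ^ k) = μ ^ k * finrank R M := by
  induction k with
  | zero => simp
  | succ k ih =>
    rw [pow_succ, Module.End.mul_eq_comp,
      trace_comp_eq_mul_of_commute_of_isNilpotent μ ((Commute.refl f).pow_left k) hf, ih]
    ring

theorem Module.End.trace_pow_eq_sum_roots_charpoly_pow {K V : Type*} [Field K] [IsAlgClosed K]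
    [AddCommGroup V] [Module K V] [FiniteDimensional K V] (f : Module.End K V) (k : ℕ) :
    LinearMap.trace K V (f ^ k) = (f.charpoly.roots.map (· ^ k)).sum := by
  classical
  let g : K → K := fun μ ↦ μ ^ k * f.charpoly.rootMultiplicity μ
  have hds := DirectSum.isInternal_submodule_of_iSupIndep_of_iSup_eq_top
    f.independent_maxGenEigenspace f.iSup_maxGenEigenspace_eq_top
  have hfin := WellFoundedGT.finite_ne_bot_of_iSupIndep f.independent_maxGenEigenspace
  -- `f - μ` is nilpotent on the generalized eigenspace of `μ`, whose dimension is the multiplicity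
  -- of `μ` as a root of `χ_f`.
  have hrestrict (μ : K) : LinearMap.trace K _
      ((f ^ k).restrict (f.mapsTo_maxGenEigenspace_of_comm ((Commute.refl f).pow_right k) μ))
        = g μ := by
    rw [← Module.End.pow_restrict (h := f.mapsTo_maxGenEigenspace_of_comm (Commute.refl f) μ),
      LinearMap.trace_pow_eq_of_isNilpotent_sub
        (f.isNilpotent_restrict_maxGenEigenspace_sub_algebraMap μ),
      LinearMap.finrank_maxGenEigenspace_eq]
  have hmult {μ : K} (hμ : μ ∈ Function.support g) : f.charpoly.rootMultiplicity μ ≠ 0 := by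
    rintro h
    simp [g, h] at hμ
  have hsupp_eig : Function.support g ⊆ hfin.toFinset := by
    intro μ hμ
    simpa [← LinearMap.finrank_maxGenEigenspace_eq] using hmult hμ
  have hsupp_roots : Function.support g ⊆ f.charpoly.roots.toFinset := by
    intro μ hμ
    simpa [← count_roots] using hmult hμ
  rw [LinearMap.trace_eq_sum_trace_restrict' hds hfin
      (fun μ ↦ f.mapsTo_maxGenEigenspace_of_comm ((Commute.refl f).pow_right k) μ),
    sum_congr rfl fun μ _ ↦ hrestrict μ,
    ← finsum_eq_sum_of_support_subset g hsupp_eig, finsum_eq_sum_of_support_subset g hsupp_roots,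
    sum_multiset_map_count]
  simp [g, count_roots, mul_comm]

namespace Matrix

variable {n R S : Type*} [Fintype n] [DecidableEq n] [CommRing R] [CommRing S]

noncomputable def newtonSum (A : Matrix n n R) (k : ℕ) : R :=
  k * A.charpoly.coeff (Fintype.card n - k) +
    ∑ j ∈ range k, A.charpoly.coeff (Fintype.card n - j) * trace (A ^ (k - j))

theorem map_newtonSum (f : R →+* S) (A : Matrix n n R) (k : ℕ) :
    f (A.newtonSum k) = (A.map f).newtonSum k := by
  have htrace (i : ℕ) : f (trace (A ^ i)) = trace (A.map f ^ i) := by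
    rw [← RingHom.mapMatrix_apply, ← map_pow, RingHom.mapMatrix_apply, ← AddMonoidHom.map_trace]
  simp [newtonSum, charpoly_map, htrace]

theorem newtonSum_eq_zero_of_isAlgClosed {K : Type*} [Field K] [IsAlgClosed K]
    (A : Matrix n n K) {k : ℕ} (hk : k ≤ Fintype.card n) : A.newtonSum k = 0 := by
  have hdeg := A.charpoly_natDegree_eq_dim
  have hroots := splits_iff_card_roots.mp (IsAlgClosed.splits A.charpoly)
  have := newton_identity_of_card_roots hroots (hdeg ▸ hk)
  simpa [hdeg, newtonSum, ← trace_toLin'_eq, toLin'_pow,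
    Module.End.trace_pow_eq_sum_roots_charpoly_pow, charpoly_toLin'] using this

theorem newtonSum_eq_zero (A : Matrix n n R) {k : ℕ} (hk : k ≤ Fintype.card n) :
    A.newtonSum k = 0 := by
  let F := FractionRing (MvPolynomial (n × n) ℤ)
  let φ := (algebraMap F (AlgebraicClosure F)).comp (algebraMap (MvPolynomial (n × n) ℤ) F)
  have hφ : Function.Injective φ :=
    (algebraMap F _).injective.comp (IsFractionRing.injective _ F)
  have hgeneric : (mvPolynomialX n n ℤ).newtonSum k = 0 :=
    hφ (by rw [map_newtonSum, map_zero, newtonSum_eq_zero_of_isAlgClosed _ hk])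
  have hA : (mvPolynomialX n n ℤ).map
      (MvPolynomial.eval₂Hom (Int.castRingHom R) fun ij ↦ A ij.1 ij.2) = A :=
    mvPolynomialX_map_eval₂ _ A
  rw [← hA, ← map_newtonSum, hgeneric, map_zero]

end Matrix

theorem stmt_7 (K : Type*) [CommRing K] [Algebra ℚ K] (n : ℕ)
    (A : Matrix (Fin n) (Fin n) K)
    (h : ∀ i ∈ Finset.Icc 1 n, Matrix.trace (A ^ i) = 0) :
    Matrix.charpoly A = Polynomial.X ^ n := by
  nontriviality K
  have hcoeff {k : ℕ} (hk0 : k ≠ 0) (hkn : k ≤ n) : A.charpoly.coeff (n - k) = 0 := by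
    have hnewton := A.newtonSum_eq_zero (k := k) (by simpa using hkn)
    rw [Matrix.newtonSum, Fintype.card_fin,
      sum_eq_zero fun j hj ↦ by rw [h (k - j) (by grind), mul_zero], add_zero] at hnewton
    have hunit : IsUnit (k : K) := by
      simpa using ((Nat.cast_ne_zero.mpr hk0 : (k : ℚ) ≠ 0).isUnit.map (algebraMap ℚ K))
    exact hunit.mul_right_eq_zero.mp hnewton
  have hdeg : A.charpoly.natDegree = n := by rw [A.charpoly_natDegree_eq_dim, Fintype.card_fin]
  suffices A.charpoly = X ^ A.charpoly.natDegree by rwa [hdeg] at this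
  rw [A.charpoly_monic.eq_X_pow_iff_natDegree_le_natTrailingDegree]
  refine le_natTrailingDegree A.charpoly_monic.ne_zero fun m hm ↦ ?_
  simpa [Nat.sub_sub_self (hm.le.trans hdeg.le)] using
    hcoeff (k := n - m) (by omega) (Nat.sub_le n m)
end

section
/- Let A be an n×n matrix over a commutative ring K whose characteristic polynomial χ_A equals t^n. Then Tr(A^i) = 0 for every positive integer i. -/
/-! Since `χ_A = t^n`, its reverse `det (1 - t A)` is `1`. By Jacobi's formula and the
geometric series `adj (1 - t A) = det (1 - t A) · (1 + t A + ⋯ + t^(k-1) A^(k-1)) + O(t^k)`,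
`-d/dt det (1 - t A) ≡ det (1 - t A) · ∑_{j<k} tr (A^(j+1)) t^j (mod t^k)`; the left side vanishes,
so every `tr (A^(j+1))` does. -/

open Polynomial Matrix Finset

namespace Matrix

variable {R n : Type*} [CommRing R] [Fintype n] [DecidableEq n]

theorem derivative_det_eq_sum_det_updateCol (M : Matrix n n R[X]) :
    derivative M.det = ∑ i, (M.updateCol i fun j ↦ derivative (M j i)).det := by
  simp only [det_apply', map_sum, derivative_mul, derivative_intCast, zero_mul, zero_add,
    derivative_prod_finset, mul_sum]
  rw [sum_comm]
  refine sum_congr rfl fun i _ ↦ sum_congr rfl fun σ _ ↦ ?_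
  rw [← mul_prod_erase _ _ (mem_univ i), updateCol_self, mul_comm (derivative _)]
  congr 2
  exact prod_congr rfl fun j hj ↦ by
    rw [updateCol_apply, if_neg (ne_of_mem_erase hj)]

theorem derivative_det (M : Matrix n n R[X]) :
    derivative M.det = trace (adjugate M * M.map derivative) := by
  rw [derivative_det_eq_sum_det_updateCol, trace]
  refine sum_congr rfl fun i _ ↦ ?_
  rw [← cramer_apply, cramer_eq_adjugate_mulVec]
  simp [mul_apply, mulVec, dotProduct]

theorem adjugate_one_sub (a : Matrix n n R) (k : ℕ) :
    adjugate (1 - a) = (1 - a).det • ∑ j ∈ range k, a ^ j + adjugate (1 - a) * a ^ k := by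
  have h := congrArg (adjugate (1 - a) * ·) (mul_neg_geom_sum a k)
  rw [← mul_assoc, adjugate_mul, smul_mul, one_mul, mul_sub, mul_one] at h
  exact sub_eq_iff_eq_add.mp h.symm

/-- Newton's identities in generating-function form, truncated at degree `k`. -/
theorem X_pow_dvd_derivative_charpolyRev_add (M : Matrix n n R) (k : ℕ) :
    X ^ k ∣ derivative M.charpolyRev +
      M.charpolyRev * ∑ j ∈ range k, X ^ j * C (trace (M ^ (j + 1))) := by
  set N := M.map C
  have hderiv : (1 - (X : R[X]) • N).map derivative = -N := by
    ext i j; by_cases hij : i = j <;> simp [N, hij]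
  have htrace (j : ℕ) : trace (((X : R[X]) • N) ^ j * N) = X ^ j * C (trace (M ^ (j + 1))) := by
    rw [_root_.smul_pow, smul_mul, trace_smul, ← pow_succ, ← Matrix.map_pow,
      ← AddMonoidHom.map_trace, smul_eq_mul]
  have hadj : trace (adjugate (1 - (X : R[X]) • N) * N) = (1 - (X : R[X]) • N).det *
      ∑ j ∈ range k, X ^ j * C (trace (M ^ (j + 1))) +
      X ^ k * trace (adjugate (1 - (X : R[X]) • N) * N ^ (k + 1)) := by
    conv_lhs => rw [adjugate_one_sub ((X : R[X]) • N) k]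
    rw [add_mul, trace_add, smul_mul, trace_smul, sum_mul, trace_sum, smul_eq_mul]
    simp only [htrace]
    rw [mul_assoc, _root_.smul_pow, smul_mul, Matrix.mul_smul, trace_smul, smul_eq_mul, ← pow_succ]
  refine ⟨-trace (adjugate (1 - (X : R[X]) • N) * N ^ (k + 1)), ?_⟩
  rw [charpolyRev, derivative_det, hderiv, mul_neg, trace_neg, hadj]
  ring

theorem charpolyRev_eq_one_of_charpoly_eq_X_pow {M : Matrix n n R} {m : ℕ}
    (h : M.charpoly = X ^ m) : M.charpolyRev = 1 := by
  rw [← reverse_charpoly, h, ← mul_one (X ^ m), reverse_X_pow_mul, ← C_1, reverse_C]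

theorem trace_pow_eq_zero_of_charpolyRev_eq_one {M : Matrix n n R} (h : M.charpolyRev = 1)
    {i : ℕ} (hi : 0 < i) : trace (M ^ i) = 0 := by
  obtain ⟨j, rfl⟩ := Nat.exists_eq_add_of_lt hi
  have hdvd := X_pow_dvd_derivative_charpolyRev_add M (j + 1)
  rw [h, derivative_one, zero_add, one_mul, X_pow_dvd_iff] at hdvd
  simpa [finsetSum_coeff, coeff_X_pow_mul', coeff_C] using hdvd j (by omega)

end Matrix

theorem stmt_8 (K : Type*) [CommRing K] (n : ℕ)
    (A : Matrix (Fin n) (Fin n) K)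
    (h : Matrix.charpoly A = Polynomial.X ^ n) :
    ∀ i : ℕ, 0 < i → Matrix.trace (A ^ i) = 0 :=
  fun _ ↦ trace_pow_eq_zero_of_charpolyRev_eq_one (charpolyRev_eq_one_of_charpoly_eq_X_pow h)
end

section
/- Let A, B, S be three n×n matrices over a commutative ring K such that AB = BA. Then det(AS + B) = det(SA + B). -/
/-!
Since `adjugate A * (A * S + B) = (S * A + B) * adjugate A` as soon as `adjugate A` commutes
with `B`, which holds when `A` commutes with `B` and `det A` is a non-zero-divisor, the identity
follows in that case after cancelling `det (adjugate A) = det A ^ (n - 1)`. The general case is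
obtained by applying this to `X • 1 + A` over `R[X]`, whose determinant is monic, and
evaluating at `X = 0`.
-/

open Matrix Polynomial

namespace Matrix

variable {ι R : Type*} [Fintype ι] [DecidableEq ι] [CommRing R]

theorem commute_adjugate_left_of_isRegular_det {A B : Matrix ι ι R} (h : Commute A B)
    (hA : IsRegular A.det) : Commute A.adjugate B := by
  refine hA.left.isSMulRegular.matrix ?_
  calc A.det • (A.adjugate * B) = A.adjugate * B * (A * A.adjugate) := by
        rw [mul_adjugate, Matrix.mul_smul, mul_one]
    _ = A.adjugate * A * B * A.adjugate := by simp only [mul_assoc, h.eq]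
    _ = A.det • (B * A.adjugate) := by
        rw [adjugate_mul, Matrix.smul_mul, one_mul, Matrix.smul_mul]

theorem det_mul_add_comm_of_isRegular_det {A B : Matrix ι ι R} (h : Commute A B)
    (hA : IsRegular A.det) (S : Matrix ι ι R) : det (A * S + B) = det (S * A + B) := by
  have hfactor : A.adjugate * (A * S + B) = (S * A + B) * A.adjugate := by
    rw [mul_add, add_mul, ← mul_assoc, adjugate_mul, mul_assoc, mul_adjugate,
      (commute_adjugate_left_of_isRegular_det h hA).eq, Matrix.smul_mul, Matrix.mul_smul,
      one_mul, mul_one]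
  have hreg : IsLeftRegular A.adjugate.det := by
    rw [det_adjugate]; exact (hA.pow _).left
  apply hreg
  simpa only [det_mul, mul_comm _ A.adjugate.det] using congrArg det hfactor

theorem mapMatrix_evalRingHom_zero_X_smul_one_add (A : Matrix ι ι R) :
    (evalRingHom 0).mapMatrix ((X : R[X]) • (1 : Matrix ι ι R[X]) + A.map C) = A := by
  ext i j
  by_cases hij : i = j <;> simp [hij]

theorem det_mul_add_comm_of_commute {A B : Matrix ι ι R} (h : Commute A B) (S : Matrix ι ι R) :
    det (A * S + B) = det (S * A + B) := by
  set A' : Matrix ι ι R[X] := (X : R[X]) • 1 + A.map C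
  have hA' : IsRegular A'.det := Monic.isRegular (leadingCoeff_det_X_one_add_C A)
  have h' : Commute A' (B.map C) :=
    ((Commute.one_left _).smul_left _).add_left (h.map C.mapMatrix)
  have hA'_eval : (evalRingHom 0).mapMatrix A' = A := mapMatrix_evalRingHom_zero_X_smul_one_add A
  have hC (M : Matrix ι ι R) : (evalRingHom 0).mapMatrix (M.map C) = M := by ext; simp
  clear_value A'
  have key := congrArg (evalRingHom 0) (det_mul_add_comm_of_isRegular_det h' hA' (S.map C))
  rwa [RingHom.map_det, RingHom.map_det, map_add, map_mul, map_add, map_mul, hA'_eval, hC, hC]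
    at key

end Matrix

theorem stmt_16 (K : Type*) [CommRing K] (n : ℕ)
    (A B S : Matrix (Fin n) (Fin n) K) (h : A * B = B * A) :
    Matrix.det (A * S + B) = Matrix.det (S * A + B) :=
  det_mul_add_comm_of_commute h S
end

section
/- Let A, B, C, D be four n×n matrices over a commutative ring K satisfying AC = CA. Then the determinant of the 2n×2n block matrix [[A, B], [C, D]] equals det(AD − CB). -/
/-!
Multiplying `[[A, B], [C, D]]` on the left by `[[adj A, 0], [-C, A]]` gives, since `AC = CA`,
the block upper triangular matrix `[[det A • 1, adj A * B], [0, AD - CB]]`; comparing determinants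
yields the identity multiplied by `(det A)^n`, which can be cancelled when `det A` is a
nonzerodivisor. In general, replace `A` by `X + A` over `K[X]`: it still commutes with `C`, its
determinant is the monic polynomial `charpoly (-A)`, hence regular, and setting `X = 0` recovers
the identity for `A`.
-/

open Matrix Polynomial

section

variable {m R : Type*} [Fintype m] [DecidableEq m] [CommRing R]

theorem det_pow_mul_det_fromBlocks_of_commute {A B C D : Matrix m m R} (h : Commute A C) :
    A.det ^ Fintype.card m * (fromBlocks A B C D).det
      = A.det ^ Fintype.card m * (A * D - C * B).det := by
  have hprod : fromBlocks (adjugate A) 0 (-C) A * fromBlocks A B C D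
      = fromBlocks (A.det • 1) (adjugate A * B) 0 (A * D - C * B) := by
    rw [fromBlocks_multiply]
    congr 1 <;> simp [adjugate_mul, h.eq, sub_eq_neg_add]
  have hadj : (adjugate A).det * A.det = A.det ^ Fintype.card m := by
    rw [← det_mul, adjugate_mul, det_smul, det_one, mul_one]
  simpa [det_mul, det_fromBlocks_zero₁₂, det_fromBlocks_zero₂₁, hadj] using congrArg det hprod

theorem det_fromBlocks_of_commute_of_isRegular {A B C D : Matrix m m R} (h : Commute A C)
    (hA : IsRegular A.det) : (fromBlocks A B C D).det = (A * D - C * B).det :=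
  (hA.pow _).left (det_pow_mul_det_fromBlocks_of_commute h)

theorem commute_charmatrix_map_C {A C : Matrix m m R} (h : Commute A C) :
    Commute (charmatrix A) (C.map Polynomial.C) := by
  refine .sub_left (scalar_commute _ (fun _ => commute_X _) _) ?_
  simp only [RingHom.mapMatrix_apply, Commute, SemiconjBy, ← Matrix.map_mul, h.eq]

theorem charmatrix_neg_map_eval_zero (A : Matrix m m R) : (charmatrix (-A)).map (eval 0) = A := by
  ext i j
  by_cases hij : i = j <;> simp [hij]

theorem det_fromBlocks_of_commute {A B C D : Matrix m m R} (h : Commute A C) :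
    (fromBlocks A B C D).det = (A * D - C * B).det := by
  have hX := det_fromBlocks_of_commute_of_isRegular (B := B.map Polynomial.C)
    (D := D.map Polynomial.C) (commute_charmatrix_map_C h.neg_left) (charpoly_monic (-A)).isRegular
  have hmap : ∀ M : Matrix m m R, (M.map Polynomial.C).map (evalRingHom 0) = M := fun M => by
    ext; simp
  have hev := congrArg (evalRingHom 0) hX
  rw [RingHom.map_det, RingHom.map_det, map_sub, map_mul, map_mul] at hev
  simp only [RingHom.mapMatrix_apply] at hev
  rwa [fromBlocks_map, hmap, hmap, hmap, coe_evalRingHom, charmatrix_neg_map_eval_zero] at hev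

end

theorem stmt_17 (K : Type*) [CommRing K] (n : ℕ)
    (A B C D : Matrix (Fin n) (Fin n) K) (h : A * C = C * A) :
    Matrix.det (Matrix.fromBlocks A B C D) = Matrix.det (A * D - C * B) :=
  det_fromBlocks_of_commute h
end

section
/- Let A be an n×n matrix over K, D an m×m matrix over K, p an n×1 column vector, q an m×1 column vector, v a 1×m row vector, and u a 1×n row vector. Then the determinant of the (n+m)×(n+m) block matrix [[A, pv], [qu, D]] equals det A · det D − (u·adj(A)·p) · (v·adj(D)·q), where the two products u·adj(A)·p and v·adj(D)·q are 1×1 matrices identified with their unique entries. -/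
/-!
For invertible `A` and `D`, the Schur complement of `A` is `D - (u A⁻¹ p) • q v`, a rank-one
perturbation of `D`, and the matrix determinant lemma evaluates its determinant. Both sides of the
formula commute with ring homomorphisms, so the general case follows from the generic one: over
`R[X]` the matrices `X • 1 + A` and `X • 1 + D` have monic determinants, which become units in the
total ring of fractions of `R[X]`, into which `R[X]` embeds; evaluating at `X = 0` recovers `A` and `D`.
-/

open Matrix Polynomial
open scoped nonZeroDivisors

namespace Matrix

variable {m n ι R S : Type*} [Fintype m] [Fintype n] [DecidableEq m] [DecidableEq n]
  [CommRing R] [CommRing S]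

theorem mul_apply_of_unique [Fintype ι] [Unique ι] {κ : Type*} (X : Matrix κ ι R)
    (Y : Matrix ι κ R) (i j : κ) : (X * Y) i j = X i default * Y default j := by
  rw [mul_apply, Fintype.sum_unique]

theorem mul_nonsing_inv_mul_apply (A : Matrix m m R) (u : Matrix ι m R) (p : Matrix m ι R)
    (i j : ι) : (u * A⁻¹ * p) i j = Ring.inverse A.det * (u * adjugate A * p) i j := by
  rw [inv_def, Matrix.mul_smul, Matrix.smul_mul, smul_apply, smul_eq_mul]

theorem det_fromBlocks_mul_mul_of_isUnit [Fintype ι] [Unique ι] {A : Matrix m m R}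
    {D : Matrix n n R} (hA : IsUnit A.det) (hD : IsUnit D.det) (p : Matrix m ι R)
    (q : Matrix n ι R) (v : Matrix ι n R) (u : Matrix ι m R) :
    det (fromBlocks A (p * v) (q * u) D) =
      det A * det D - (u * adjugate A * p) default default * (v * adjugate D * q) default default := by
  let := invertibleOfIsUnitDet A hA
  have schur : det (fromBlocks A (p * v) (q * u) D) =
      det A * det (D + q * (-(u * A⁻¹ * p) * v)) := by
    rw [det_fromBlocks₁₁, invOf_eq_nonsing_inv]
    simp only [Matrix.mul_assoc, Matrix.neg_mul, Matrix.mul_neg, sub_eq_add_neg]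
  have assoc : -(u * A⁻¹ * p) * v * D⁻¹ * q = -((u * A⁻¹ * p) * (v * D⁻¹ * q)) := by
    simp only [Matrix.neg_mul, Matrix.mul_assoc]
  rw [schur, det_add_mul _ _ hD, det_unique (1 + _), assoc, add_apply, one_apply_eq, neg_apply,
    mul_apply_of_unique, mul_nonsing_inv_mul_apply, mul_nonsing_inv_mul_apply]
  linear_combination -(u * adjugate A * p) default default * (v * adjugate D * q) default default *
    (D.det * Ring.inverse D.det * Ring.mul_inverse_cancel _ hA + Ring.mul_inverse_cancel _ hD)

theorem map_det_fromBlocks_mul_mul [Fintype ι] (f : R →+* S) (A : Matrix m m R)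
    (D : Matrix n n R) (p : Matrix m ι R) (q : Matrix n ι R) (v : Matrix ι n R)
    (u : Matrix ι m R) :
    f (det (fromBlocks A (p * v) (q * u) D)) =
      det (fromBlocks (A.map f) (p.map f * v.map f) (q.map f * u.map f) (D.map f)) := by
  rw [RingHom.map_det, RingHom.mapMatrix_apply, fromBlocks_map, Matrix.map_mul, Matrix.map_mul]

theorem map_mul_adjugate_mul_apply (f : R →+* S) (A : Matrix m m R) (u : Matrix ι m R)
    (p : Matrix m ι R) (i j : ι) :
    f ((u * adjugate A * p) i j) = (u.map f * adjugate (A.map f) * p.map f) i j := by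
  rw [← RingHom.mapMatrix_apply, ← RingHom.map_adjugate, RingHom.mapMatrix_apply,
    ← Matrix.map_mul, ← Matrix.map_mul, map_apply]

theorem det_fromBlocks_mul_mul_of_mem_nonZeroDivisors [Fintype ι] [Unique ι] {A : Matrix m m R}
    {D : Matrix n n R} (hA : A.det ∈ R⁰) (hD : D.det ∈ R⁰) (p : Matrix m ι R)
    (q : Matrix n ι R) (v : Matrix ι n R) (u : Matrix ι m R) :
    det (fromBlocks A (p * v) (q * u) D) =
      det A * det D - (u * adjugate A * p) default default * (v * adjugate D * q) default default := by
  let f := algebraMap R (FractionRing R)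
  have hA' : IsUnit (A.map f).det := f.map_det A ▸ IsLocalization.map_units _ (⟨_, hA⟩ : R⁰)
  have hD' : IsUnit (D.map f).det := f.map_det D ▸ IsLocalization.map_units _ (⟨_, hD⟩ : R⁰)
  apply IsFractionRing.injective R (FractionRing R)
  rw [map_det_fromBlocks_mul_mul, map_sub, map_mul, map_mul, map_mul_adjugate_mul_apply,
    map_mul_adjugate_mul_apply, RingHom.map_det, RingHom.map_det]
  exact det_fromBlocks_mul_mul_of_isUnit hA' hD' _ _ _ _

theorem map_eval_zero_X_smul_one_add_map_C {k : Type*} [DecidableEq k] (M : Matrix k k R) :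
    ((X : R[X]) • (1 : Matrix k k R[X]) + M.map C).map (eval 0) = M := by
  ext i j
  by_cases h : i = j <;> simp [h]

theorem det_fromBlocks_mul_mul [Fintype ι] [Unique ι] (A : Matrix m m R) (D : Matrix n n R)
    (p : Matrix m ι R) (q : Matrix n ι R) (v : Matrix ι n R) (u : Matrix ι m R) :
    det (fromBlocks A (p * v) (q * u) D) =
      det A * det D - (u * adjugate A * p) default default * (v * adjugate D * q) default default := by
  have generic := congrArg (evalRingHom (0 : R)) <|
    det_fromBlocks_mul_mul_of_mem_nonZeroDivisors
      (Monic.mem_nonZeroDivisors (leadingCoeff_det_X_one_add_C A))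
      (Monic.mem_nonZeroDivisors (leadingCoeff_det_X_one_add_C D))
      (p.map C) (q.map C) (v.map C) (u.map C)
  rw [map_det_fromBlocks_mul_mul, map_sub, map_mul, map_mul, map_mul_adjugate_mul_apply,
    map_mul_adjugate_mul_apply, RingHom.map_det, RingHom.map_det] at generic
  simpa [Matrix.map_map, Function.comp_def, map_eval_zero_X_smul_one_add_map_C] using generic

end Matrix

theorem stmt_18 (K : Type*) [CommRing K] (n m : ℕ)
    (A : Matrix (Fin n) (Fin n) K) (D : Matrix (Fin m) (Fin m) K)
    (p : Matrix (Fin n) (Fin 1) K) (q : Matrix (Fin m) (Fin 1) K)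
    (v : Matrix (Fin 1) (Fin m) K) (u : Matrix (Fin 1) (Fin n) K) :
    Matrix.det (Matrix.fromBlocks A (p * v) (q * u) D) =
      Matrix.det A * Matrix.det D -
        (u * Matrix.adjugate A * p) 0 0 * (v * Matrix.adjugate D * q) 0 0 :=
  det_fromBlocks_mul_mul A D p q v u
end

section
/- Let A be an n×n matrix over a commutative ring K and k ∈ ℕ such that A^{k+1} = 0. Then (Tr A)^{nk+1} = 0 (Almkvist's theorem). -/
/-!
Let `φ m = det (powRows A m)`, the determinant of the matrix whose `i`-th row is row `i` of `A ^ m i`.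
Since `trace A * det M` is the derivative of `det (M * (1 + t A))` at `t = 0`, multiplying by
`trace A` raises one exponent `m j` by one in every possible way:
`trace A * φ m = ∑ j, φ (m + e_j)`. Iterating from `φ 0 = det 1 = 1`, `(trace A) ^ N` is a sum
of `φ m` with `∑ m i = N`. For `N = n k + 1` some `m i` exceeds `k`, so the `i`-th row of
that matrix is a row of `A ^ (k + 1) = 0` and every term vanishes.
-/

open Matrix Finset

theorem pow_smul_eq_sum_fin_of_smul_eq_sum {R M G ι : Type*} [Monoid R] [AddCommMonoid M]
    [DistribMulAction R M] [AddCommMonoid G] [Fintype ι] {c : R} {φ : G → M} (e : ι → G)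
    (hφ : ∀ g, c • φ g = ∑ j, φ (g + e j)) (N : ℕ) (g : G) :
    c ^ N • φ g = ∑ f : Fin N → ι, φ (g + ∑ x, e (f x)) := by
  induction N generalizing g with
  | zero => simp
  | succ N ih =>
    rw [← (Fin.consEquiv fun _ => ι).sum_comp, Fintype.sum_prod_type, pow_succ, mul_smul, hφ,
      Finset.smul_sum]
    refine Finset.sum_congr rfl fun j _ => ?_
    simp only [ih, Fin.consEquiv_apply, Fin.sum_univ_succ, Fin.cons_zero, Fin.cons_succ, add_assoc]

namespace Matrix

variable {ι R : Type*} [Fintype ι] [DecidableEq ι] [CommRing R]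

theorem trace_mul_det_eq_sum_det_updateRow (A M : Matrix ι ι R) :
    trace A * det M = ∑ j, det (M.updateRow j ((M * A) j)) := by
  calc trace A * det M = trace (Mᵀ * adjugate Mᵀ * Aᵀ) := by
        rw [mul_adjugate, det_transpose, smul_mul_assoc, one_mul, trace_smul, trace_transpose,
          smul_eq_mul, mul_comm]
    _ = trace (adjugate Mᵀ * (M * A)ᵀ) := by
        rw [transpose_mul, Matrix.mul_assoc, trace_mul_comm, Matrix.mul_assoc]
    _ = ∑ j, det (M.updateRow j ((M * A) j)) := by
        simp only [trace, diag, ← cramer_transpose_apply, cramer_eq_adjugate_mulVec, mul_apply,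
          mulVec, dotProduct, transpose_apply]

def powRows (A : Matrix ι ι R) (m : ι → ℕ) : Matrix ι ι R :=
  of fun i => (A ^ m i) i

theorem powRows_zero (A : Matrix ι ι R) : powRows A 0 = 1 := by
  ext i j
  simp [powRows, one_apply]

theorem updateRow_powRows_mul (A : Matrix ι ι R) (m : ι → ℕ) (j : ι) :
    (powRows A m).updateRow j ((powRows A m * A) j) = powRows A (m + Pi.single j 1) := by
  ext a b
  rcases eq_or_ne a j with rfl | haj
  · simp [powRows, pow_succ, mul_apply]
  · simp [powRows, haj]

theorem trace_mul_det_powRows (A : Matrix ι ι R) (m : ι → ℕ) :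
    trace A * det (powRows A m) = ∑ j, det (powRows A (m + Pi.single j 1)) := by
  simp only [trace_mul_det_eq_sum_det_updateRow, updateRow_powRows_mul]

theorem trace_pow_eq_sum_det_powRows (A : Matrix ι ι R) (N : ℕ) :
    trace A ^ N = ∑ f : Fin N → ι, det (powRows A (∑ x, Pi.single (f x) 1)) := by
  simpa [powRows_zero] using
    pow_smul_eq_sum_fin_of_smul_eq_sum (c := trace A) (φ := fun m => det (powRows A m))
      (fun j => Pi.single j 1) (fun m => trace_mul_det_powRows A m) N 0

theorem det_powRows_eq_zero {A : Matrix ι ι R} {p : ℕ} (hA : A ^ p = 0) {m : ι → ℕ} {i : ι}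
    (hi : p ≤ m i) : det (powRows A m) = 0 :=
  det_eq_zero_of_row_eq_zero i fun j => by simp [powRows, pow_eq_zero_of_le hi hA]

end Matrix

theorem stmt_19 (K : Type*) [CommRing K] (n k : ℕ)
    (A : Matrix (Fin n) (Fin n) K) (h : A ^ (k + 1) = 0) :
    (Matrix.trace A) ^ (n * k + 1) = 0 := by
  rw [trace_pow_eq_sum_det_powRows]
  refine sum_eq_zero fun f _ => ?_
  obtain ⟨i, hi⟩ : ∃ i, k < #{x | f x = i} :=
    Fintype.exists_lt_card_fiber_of_mul_lt_card f (by simp)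
  refine det_powRows_eq_zero h (i := i) ?_
  simpa [Finset.sum_apply, Pi.single_apply, eq_comm] using hi
end
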